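/- Let n, m ≥ 1 and let A : ℝⁿ → L(ℂ^{m(1+n)}) be continuously differentiable with A⊥⊥(x) invertible for every x. Set B(x) := Â(x) and Ã(x) := (A(x)*)^ (the transform of the pointwise Hermitian adjoint, which is well defined since (A*)⊥⊥ = (A⊥⊥)* is invertible). Then for all compactly supported continuously differentiable functions f, g : ℝⁿ → ℂ^{m(1+n)}: ∫_{ℝⁿ} ⟨g(x), N B(x) (Df)(x)⟩ dx = − ∫_{ℝⁿ} ⟨D(Ã g)(x), N f(x)⟩ dx, where (Ã g)(x) := Ã(x) g(x). -/

import Mathlib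

noncomputable section

open MeasureTheory Real ContinuousLinearMap

/-- The "normal" component space `ℂ^m`. -/
abbrev NormalSp (m : ℕ) := EuclideanSpace ℂ (Fin m)
/-- The "tangential" component space `ℂ^{mn} ≅ (ℂ^m)ⁿ`. -/
abbrev TangSp (m n : ℕ) := EuclideanSpace ℂ (Fin m × Fin n)
/-- The full space `ℂ^{m(1+n)} = ℂ^m ⊕ ℂ^{mn}`. -/
abbrev FullSp (m n : ℕ) := EuclideanSpace ℂ (Fin m ⊕ Fin m × Fin n)
/-- `ℝⁿ` with the Euclidean structure. -/
abbrev Rn (n : ℕ) := EuclideanSpace ℝ (Fin n)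

namespace LayerPotential

variable {m n : ℕ}

/-- Injection of the normal part `ℂ^m → ℂ^{m(1+n)}`, `a ↦ (a, 0)`. -/
def injN (m n : ℕ) : NormalSp m →L[ℂ] FullSp m n :=
  LinearMap.toContinuousLinearMap
  { toFun := fun a => WithLp.toLp 2 (Sum.elim a 0 : Fin m ⊕ Fin m × Fin n → ℂ)
    map_add' := by
      intro a b; ext idx; rcases idx with i | p <;> simp
    map_smul' := by
      intro c a; ext idx; rcases idx with i | p <;> simp }

/-- Injection of the tangential part `ℂ^{mn} → ℂ^{m(1+n)}`, `b ↦ (0, b)`. -/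
def injT (m n : ℕ) : TangSp m n →L[ℂ] FullSp m n :=
  LinearMap.toContinuousLinearMap
  { toFun := fun b => WithLp.toLp 2 (Sum.elim 0 b : Fin m ⊕ Fin m × Fin n → ℂ)
    map_add' := by
      intro a b; ext idx; rcases idx with i | p <;> simp
    map_smul' := by
      intro c a; ext idx; rcases idx with i | p <;> simp }

/-- Projection onto the normal part `f ↦ f⊥`. -/
def projN (m n : ℕ) : FullSp m n →L[ℂ] NormalSp m :=
  LinearMap.toContinuousLinearMap
  { toFun := fun f => WithLp.toLp 2 (fun i => f (Sum.inl i) : Fin m → ℂ)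
    map_add' := by intro a b; ext i; simp
    map_smul' := by intro c a; ext i; simp }

/-- Projection onto the tangential part `f ↦ f∥`. -/
def projT (m n : ℕ) : FullSp m n →L[ℂ] TangSp m n :=
  LinearMap.toContinuousLinearMap
  { toFun := fun f => WithLp.toLp 2 (fun p => f (Sum.inr p) : Fin m × Fin n → ℂ)
    map_add' := by intro a b; ext p; simp
    map_smul' := by intro c a; ext p; simp }

/-- The corner block `A⊥⊥`. -/
def blockNN (A : FullSp m n →L[ℂ] FullSp m n) : NormalSp m →L[ℂ] NormalSp m :=
  projN m n ∘L A ∘L injN m n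

/-- The block `A⊥∥`. -/
def blockNT (A : FullSp m n →L[ℂ] FullSp m n) : TangSp m n →L[ℂ] NormalSp m :=
  projN m n ∘L A ∘L injT m n

/-- The block `A∥⊥`. -/
def blockTN (A : FullSp m n →L[ℂ] FullSp m n) : NormalSp m →L[ℂ] TangSp m n :=
  projT m n ∘L A ∘L injN m n

/-- The block `A∥∥`. -/
def blockTT (A : FullSp m n →L[ℂ] FullSp m n) : TangSp m n →L[ℂ] TangSp m n :=
  projT m n ∘L A ∘L injT m n

/-- The transformed matrix `Â`, defined using `Ring.inverse` of the corner block
(which is the honest inverse whenever `A⊥⊥` is invertible). -/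
def hatT (A : FullSp m n →L[ℂ] FullSp m n) : FullSp m n →L[ℂ] FullSp m n :=
  injN m n ∘L ((Ring.inverse (blockNN A)) ∘L projN m n
      - ((Ring.inverse (blockNN A)) ∘L blockNT A) ∘L projT m n)
  + injT m n ∘L ((blockTN A ∘L (Ring.inverse (blockNN A))) ∘L projN m n
      + (blockTT A - (blockTN A ∘L (Ring.inverse (blockNN A))) ∘L blockNT A) ∘L projT m n)

/-- The reflection `N(f⊥, f∥) = (−f⊥, f∥)`. -/
def reflN (m n : ℕ) : FullSp m n →L[ℂ] FullSp m n :=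
  injT m n ∘L projT m n - injN m n ∘L projN m n



/-- The lower triangular factor `[[1,0],[−σ,I]] : (a,b) ↦ (a, b − a⊗σ)`. -/
def lowTri (m : ℕ) (σ : Fin n → ℝ) : FullSp m n →L[ℂ] FullSp m n :=
  LinearMap.toContinuousLinearMap
  { toFun := fun f => WithLp.toLp 2 (Sum.elim (fun i => f (Sum.inl i))
      (fun p => f (Sum.inr p) - (σ p.2 : ℂ) * f (Sum.inl p.1)) :
        Fin m ⊕ Fin m × Fin n → ℂ)
    map_add' := by
      intro a b; ext idx; rcases idx with i | p <;> simp <;> ring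
    map_smul' := by
      intro c a; ext idx; rcases idx with i | p <;> simp <;> ring }

/-- The upper triangular factor `[[1,−σᵗ],[0,I]] : (a,b) ↦ (a − Σ_k σ_k b_k, b)`. -/
def upTri (m : ℕ) (σ : Fin n → ℝ) : FullSp m n →L[ℂ] FullSp m n :=
  LinearMap.toContinuousLinearMap
  { toFun := fun f => WithLp.toLp 2 (Sum.elim (fun i => f (Sum.inl i) - ∑ k, (σ k : ℂ) * f (Sum.inr (i, k)))
      (fun p => f (Sum.inr p)) : Fin m ⊕ Fin m × Fin n → ℂ)
    map_add' := by
      intro a b; ext idx; rcases idx with i | p <;>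
        simp [Finset.sum_add_distrib, mul_add] <;> ring
    map_smul' := by
      intro c a; ext idx; rcases idx with i | p <;>
        simp [Finset.mul_sum, mul_assoc, mul_left_comm, mul_sub] }

/-- The transformed coefficients `A_σ := [[1,−σᵗ],[0,I]] · A · [[1,0],[−σ,I]]`. -/
def coeffSigma (σ : Fin n → ℝ) (A : FullSp m n →L[ℂ] FullSp m n) :
    FullSp m n →L[ℂ] FullSp m n :=
  upTri m σ ∘L A ∘L lowTri m σ

/-- The map `g ↦ (ν₀ g⊥, g⊥ ⊗ ν)`. -/
def tensorMap (m : ℕ) (ν₀ : ℝ) (ν : Fin n → ℝ) : FullSp m n →L[ℂ] FullSp m n :=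
  LinearMap.toContinuousLinearMap
  { toFun := fun g => WithLp.toLp 2 (Sum.elim (fun i => (ν₀ : ℂ) * g (Sum.inl i))
      (fun p => (ν p.2 : ℂ) * g (Sum.inl p.1)) : Fin m ⊕ Fin m × Fin n → ℂ)
    map_add' := by
      intro a b; ext idx; rcases idx with i | p <;> simp <;> ring
    map_smul' := by
      intro c a; ext idx; rcases idx with i | p <;> simp <;> ring }

/-- The map `h ↦ (Σ_k ν_k h∥,k, −ν₀ h∥)`. -/
def contractMap (m : ℕ) (ν₀ : ℝ) (ν : Fin n → ℝ) : FullSp m n →L[ℂ] FullSp m n :=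
  LinearMap.toContinuousLinearMap
  { toFun := fun h => WithLp.toLp 2 (Sum.elim (fun i => ∑ k, (ν k : ℂ) * h (Sum.inr (i, k)))
      (fun p => -(ν₀ : ℂ) * h (Sum.inr p)) : Fin m ⊕ Fin m × Fin n → ℂ)
    map_add' := by
      intro a b; ext idx; rcases idx with i | p <;>
        simp [Finset.sum_add_distrib, mul_add] <;> ring
    map_smul' := by
      intro c a; ext idx; rcases idx with i | p <;>
        simp [Finset.mul_sum, mul_assoc, mul_left_comm, mul_sub] }

/-- The one-form coefficients `Λ_A(ν₀, ν)g := A(ν₀ g⊥, g⊥⊗ν) + (Σ_k ν_k (Ag)∥,k, −ν₀ (Ag)∥)`. -/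
def lambdaForm (A : FullSp m n →L[ℂ] FullSp m n) (ν₀ : ℝ) (ν : Fin n → ℝ) :
    FullSp m n →L[ℂ] FullSp m n :=
  A ∘L tensorMap m ν₀ ν + contractMap m ν₀ ν ∘L A

/-- Partial derivative `∂_k` of a scalar function on `ℝⁿ`. -/
def pd (k : Fin n) (g : Rn n → ℂ) (x : Rn n) : ℂ :=
  fderiv ℝ g x (EuclideanSpace.single k 1)

/-- The self-adjoint first order operator `D(g⊥, g∥) := (div g∥, −∇g⊥)` acting on
functions `ℝⁿ → ℂ^{m(1+n)}`. -/
def Dop (g : Rn n → FullSp m n) (x : Rn n) : FullSp m n :=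
  WithLp.toLp 2 (Sum.elim (fun i => ∑ k, pd k (fun y => g y (Sum.inr (i, k))) x)
    (fun p => - pd p.2 (fun y => g y (Sum.inl p.1)) x) : Fin m ⊕ Fin m × Fin n → ℂ)

/-- Partial derivative `∂_t` of a scalar function on `ℝ^{1+n} = ℝ × ℝⁿ`. -/
def pdt (F : ℝ × Rn n → ℂ) (q : ℝ × Rn n) : ℂ :=
  fderiv ℝ F q (1, 0)

/-- Partial derivative `∂_{x_k}` of a scalar function on `ℝ^{1+n} = ℝ × ℝⁿ`. -/
def pdx (k : Fin n) (F : ℝ × Rn n → ℂ) (q : ℝ × Rn n) : ℂ :=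
  fderiv ℝ F q (0, EuclideanSpace.single k 1)

/-- `∂_t` of a `ℂ^{m(1+n)}`-valued function, componentwise. -/
def pdtVec (F : ℝ × Rn n → FullSp m n) (q : ℝ × Rn n) : FullSp m n :=
  WithLp.toLp 2 (fun idx => pdt (fun r => F r idx) q : Fin m ⊕ Fin m × Fin n → ℂ)

/-- The full gradient `∇u = (∂_t u, ∇_x u)` of a `ℂ^m`-valued function on `ℝ^{1+n}`. -/
def fullGrad (u : ℝ × Rn n → NormalSp m) (q : ℝ × Rn n) : FullSp m n :=
  WithLp.toLp 2 (Sum.elim (fun i => pdt (fun r => u r i) q)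
    (fun p => pdx p.2 (fun r => u r p.1) q) : Fin m ⊕ Fin m × Fin n → ℂ)

/-- The divergence `div G = ∂_t G⊥ + Σ_k ∂_{x_k} G∥,k` of a `ℂ^{m(1+n)}`-valued field
on `ℝ^{1+n}`, valued in `ℂ^m`. -/
def divOp (G : ℝ × Rn n → FullSp m n) (q : ℝ × Rn n) : NormalSp m :=
  WithLp.toLp 2 (fun i => pdt (fun r => G r (Sum.inl i)) q
    + ∑ k, pdx k (fun r => G r (Sum.inr (i, k))) q : Fin m → ℂ)

/-- `u` is a weak (here: classical) solution of `div A∇u = 0` on `Ω`,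
for `t`-independent coefficients `A`. -/
def SolvesDiv (A : Rn n → FullSp m n →L[ℂ] FullSp m n) (u : ℝ × Rn n → NormalSp m)
    (Ω : Set (ℝ × Rn n)) : Prop :=
  ∀ q ∈ Ω, divOp (fun r => A r.2 (fullGrad u r)) q = 0

/-- The conormal gradient `∇_A u = ((A∇u)⊥, ∇_x u)`. -/
def conormalGrad (A : Rn n → FullSp m n →L[ℂ] FullSp m n) (u : ℝ × Rn n → NormalSp m)
    (q : ℝ × Rn n) : FullSp m n :=
  WithLp.toLp 2 (Sum.elim (fun i => (A q.2 (fullGrad u q)) (Sum.inl i))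
    (fun p => pdx p.2 (fun r => u r p.1) q) : Fin m ⊕ Fin m × Fin n → ℂ)

/-! Pointwise, `N Â(T)` and `N Â(T*)` are adjoint to each other: conjugating by `N` flips the
signs of the off-diagonal blocks, which is exactly what taking adjoints does to the
Schur-complement formula for `Â`. Hence the left side is `∫ ⟨Df, N Ã g⟩`. Integration by parts,
component by component, shows that `D` is formally self-adjoint, and `D` anticommutes with `N`;
together these turn `∫ ⟨Df, N Ã g⟩` into `-∫ ⟨N f, D(Ã g)⟩`. -/

open ComplexConjugate

section Blocks

@[simp] lemma injN_apply_inl (a : NormalSp m) (i : Fin m) : injN m n a (Sum.inl i) = a i := rfl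
@[simp] lemma injN_apply_inr (a : NormalSp m) (p : Fin m × Fin n) :
    injN m n a (Sum.inr p) = 0 := rfl
@[simp] lemma injT_apply_inl (b : TangSp m n) (i : Fin m) : injT m n b (Sum.inl i) = 0 := rfl
@[simp] lemma injT_apply_inr (b : TangSp m n) (p : Fin m × Fin n) :
    injT m n b (Sum.inr p) = b p := rfl
@[simp] lemma projN_apply (v : FullSp m n) (i : Fin m) : projN m n v i = v (Sum.inl i) := rfl
@[simp] lemma projT_apply (v : FullSp m n) (p : Fin m × Fin n) :
    projT m n v p = v (Sum.inr p) := rfl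

@[simp] lemma reflN_apply_inl (v : FullSp m n) (i : Fin m) :
    reflN m n v (Sum.inl i) = -v (Sum.inl i) := by
  simp [reflN]

@[simp] lemma reflN_apply_inr (v : FullSp m n) (p : Fin m × Fin n) :
    reflN m n v (Sum.inr p) = v (Sum.inr p) := by
  simp [reflN]

lemma adjoint_injN : adjoint (injN m n) = projN m n := by
  refine ((eq_adjoint_iff _ _).2 fun v a => ?_).symm
  simp [PiLp.inner_apply, Fintype.sum_sum_type]

lemma adjoint_injT : adjoint (injT m n) = projT m n := by
  refine ((eq_adjoint_iff _ _).2 fun v b => ?_).symm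
  simp [PiLp.inner_apply, Fintype.sum_sum_type]

lemma adjoint_projN : adjoint (projN m n) = injN m n := by
  rw [← adjoint_injN, adjoint_adjoint]

lemma adjoint_projT : adjoint (projT m n) = injT m n := by
  rw [← adjoint_injT, adjoint_adjoint]

lemma adjoint_reflN : adjoint (reflN m n) = reflN m n := by
  simp [reflN, adjoint_comp, adjoint_injN, adjoint_injT, adjoint_projN, adjoint_projT]

lemma reflN_comp_injN : reflN m n ∘L injN m n = -injN m n := by
  ext a idx; rcases idx with i | p <;> simp

lemma reflN_comp_injT : reflN m n ∘L injT m n = injT m n := by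
  ext b idx; rcases idx with i | p <;> simp

lemma projN_comp_reflN : projN m n ∘L reflN m n = -projN m n := by
  ext v i; simp

lemma projT_comp_reflN : projT m n ∘L reflN m n = projT m n := by
  ext v p; simp

lemma adjoint_ringInverse {𝕜 E : Type*} [RCLike 𝕜] [NormedAddCommGroup E]
    [InnerProductSpace 𝕜 E] [CompleteSpace E] (a : E →L[𝕜] E) :
    adjoint (Ring.inverse a) = Ring.inverse (adjoint a) := by
  rw [← star_eq_adjoint, ← star_eq_adjoint, Ring.inverse_star]

variable (T : FullSp m n →L[ℂ] FullSp m n)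

lemma adjoint_blockNN : adjoint (blockNN T) = blockNN (adjoint T) := by
  simp [blockNN, adjoint_comp, adjoint_injN, adjoint_projN, comp_assoc]

lemma adjoint_blockNT : adjoint (blockNT T) = blockTN (adjoint T) := by
  simp [blockNT, blockTN, adjoint_comp, adjoint_injT, adjoint_projN, comp_assoc]

lemma adjoint_blockTN : adjoint (blockTN T) = blockNT (adjoint T) := by
  simp [blockNT, blockTN, adjoint_comp, adjoint_injN, adjoint_projT, comp_assoc]

lemma adjoint_blockTT : adjoint (blockTT T) = blockTT (adjoint T) := by
  simp [blockTT, adjoint_comp, adjoint_injT, adjoint_projT, comp_assoc]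

def blockOp (a : NormalSp m →L[ℂ] NormalSp m) (b : TangSp m n →L[ℂ] NormalSp m)
    (c : NormalSp m →L[ℂ] TangSp m n) (d : TangSp m n →L[ℂ] TangSp m n) :
    FullSp m n →L[ℂ] FullSp m n :=
  injN m n ∘L (a ∘L projN m n + b ∘L projT m n) + injT m n ∘L (c ∘L projN m n + d ∘L projT m n)

section BlockOp

variable (a : NormalSp m →L[ℂ] NormalSp m) (b : TangSp m n →L[ℂ] NormalSp m)
  (c : NormalSp m →L[ℂ] TangSp m n) (d : TangSp m n →L[ℂ] TangSp m n)

lemma adjoint_blockOp :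
    adjoint (blockOp a b c d) = blockOp (adjoint a) (adjoint c) (adjoint b) (adjoint d) := by
  simp only [blockOp, map_add, adjoint_comp, adjoint_injN, adjoint_injT, adjoint_projN,
    adjoint_projT, comp_add, comp_assoc]
  abel

lemma reflN_comp_blockOp : reflN m n ∘L blockOp a b c d = blockOp (-a) (-b) c d := by
  simp only [blockOp, comp_add, ← comp_assoc, reflN_comp_injN, reflN_comp_injT, neg_comp,
    comp_neg]

lemma blockOp_comp_reflN : blockOp a b c d ∘L reflN m n = blockOp (-a) b (-c) d := by
  simp only [blockOp, add_comp, comp_assoc, projN_comp_reflN, projT_comp_reflN, neg_comp,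
    comp_neg]

end BlockOp

lemma isUnit_blockNN_adjoint (hT : IsUnit (blockNN T)) : IsUnit (blockNN (adjoint T)) := by
  rw [← adjoint_blockNN, ← star_eq_adjoint]
  exact hT.star

lemma hatT_eq_blockOp :
    hatT T = blockOp (Ring.inverse (blockNN T)) (-(Ring.inverse (blockNN T) ∘L blockNT T))
      (blockTN T ∘L Ring.inverse (blockNN T))
      (blockTT T - (blockTN T ∘L Ring.inverse (blockNN T)) ∘L blockNT T) := by
  simp only [hatT, blockOp, sub_eq_add_neg, neg_comp]

lemma adjoint_hatT_comp_reflN :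
    adjoint (hatT T) ∘L reflN m n = reflN m n ∘L hatT (adjoint T) := by
  rw [hatT_eq_blockOp, hatT_eq_blockOp, adjoint_blockOp, reflN_comp_blockOp,
    blockOp_comp_reflN]
  simp only [adjoint_blockNN, adjoint_blockNT, adjoint_blockTN, adjoint_blockTT,
    adjoint_ringInverse, map_sub, map_neg, adjoint_comp, neg_neg, comp_assoc]

lemma inner_reflN_hatT_apply (v w : FullSp m n) :
    inner ℂ (reflN m n (hatT T v)) w = inner ℂ v (reflN m n (hatT (adjoint T) w)) := by
  change inner ℂ ((reflN m n ∘L hatT T) v) w = _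
  rw [← adjoint_inner_right, adjoint_comp, adjoint_reflN, adjoint_hatT_comp_reflN, comp_apply]

end Blocks

section Smoothness

variable {X : Type*} [NormedAddCommGroup X] [NormedSpace ℝ X] {k : WithTop ℕ∞}

lemma _root_.ContDiff.clm_comp_complex {E F G : Type*} [NormedAddCommGroup E] [NormedSpace ℂ E]
    [NormedAddCommGroup F] [NormedSpace ℂ F] [NormedAddCommGroup G] [NormedSpace ℂ G]
    {u : X → F →L[ℂ] G} {v : X → E →L[ℂ] F} (hu : ContDiff ℝ k u) (hv : ContDiff ℝ k v) :
    ContDiff ℝ k fun x => u x ∘L v x :=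
  ((compL ℂ E F G).bilinearRestrictScalars ℝ).isBoundedBilinearMap.contDiff.comp₂ hu hv

lemma _root_.ContDiff.clm_apply_complex {E F : Type*} [NormedAddCommGroup E] [NormedSpace ℂ E]
    [NormedAddCommGroup F] [NormedSpace ℂ F]
    {u : X → E →L[ℂ] F} {v : X → E} (hu : ContDiff ℝ k u) (hv : ContDiff ℝ k v) :
    ContDiff ℝ k fun x => u x (v x) :=
  ((apply ℂ F : E →L[ℂ] (E →L[ℂ] F) →L[ℂ] F).flip.bilinearRestrictScalars ℝ
    ).isBoundedBilinearMap.contDiff.comp₂ hu hv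

lemma contDiff_hatT {A : X → FullSp m n →L[ℂ] FullSp m n} (hA : ContDiff ℝ k A)
    (hAinv : ∀ x, IsUnit (blockNN (A x))) : ContDiff ℝ k fun x => hatT (A x) := by
  have hNN : ContDiff ℝ k fun x => blockNN (A x) :=
    contDiff_const.clm_comp_complex (hA.clm_comp_complex contDiff_const)
  have hNT : ContDiff ℝ k fun x => blockNT (A x) :=
    contDiff_const.clm_comp_complex (hA.clm_comp_complex contDiff_const)
  have hTN : ContDiff ℝ k fun x => blockTN (A x) :=
    contDiff_const.clm_comp_complex (hA.clm_comp_complex contDiff_const)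
  have hTT : ContDiff ℝ k fun x => blockTT (A x) :=
    contDiff_const.clm_comp_complex (hA.clm_comp_complex contDiff_const)
  have hInv : ContDiff ℝ k fun x => Ring.inverse (blockNN (A x)) := by
    refine contDiff_iff_contDiffAt.2 fun x => ?_
    exact (contDiffAt_ringInverse ℝ (hAinv x).unit).comp x hNN.contDiffAt
  exact (contDiff_const.clm_comp_complex
      ((hInv.clm_comp_complex contDiff_const).sub
        ((hInv.clm_comp_complex hNT).clm_comp_complex contDiff_const))).add
    (contDiff_const.clm_comp_complex
      (((hTN.clm_comp_complex hInv).clm_comp_complex contDiff_const).add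
        ((hTT.sub ((hTN.clm_comp_complex hInv).clm_comp_complex hNT)).clm_comp_complex
          contDiff_const)))

lemma contDiff_adjoint {A : X → FullSp m n →L[ℂ] FullSp m n} (hA : ContDiff ℝ k A) :
    ContDiff ℝ k fun x => adjoint (A x) :=
  (starL' ℝ).contDiff.comp hA

end Smoothness

section IntegrationByParts

variable {E : Type*} [NormedAddCommGroup E] [MeasurableSpace E] [BorelSpace E] {μ : Measure E}

lemma integrable_conj_mul [IsFiniteMeasureOnCompacts μ] {a b : E → ℂ} (ha : Continuous a)
    (hb : Continuous b) (hac : HasCompactSupport a) :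
    Integrable (fun x => conj (a x) * b x) μ :=
  ((Complex.continuous_conj.comp ha).mul hb).integrable_of_hasCompactSupport
    (hac.comp_left (map_zero _)).mul_right

lemma integral_conj_fderiv_mul [NormedSpace ℝ E] [FiniteDimensional ℝ E] [μ.IsAddHaarMeasure]
    {a b : E → ℂ} (ha : ContDiff ℝ 1 a) (hb : ContDiff ℝ 1 b) (hac : HasCompactSupport a) (v : E) :
    ∫ x, conj (fderiv ℝ a x v) * b x ∂μ = -∫ x, conj (a x) * fderiv ℝ b x v ∂μ := by
  have hconj : ∀ x, fderiv ℝ (fun y => conj (a y)) x v = conj (fderiv ℝ a x v) := fun x => by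
    rw [show (fun y => conj (a y)) = Complex.conjCLE ∘ a from rfl,
      Complex.conjCLE.comp_fderiv]
    rfl
  have ha' : ContDiff ℝ 1 fun y => conj (a y) := Complex.conjCLE.contDiff.comp ha
  have hda : Continuous fun x => fderiv ℝ a x v :=
    (ha.continuous_fderiv one_ne_zero).clm_apply continuous_const
  have hdb : Continuous fun x => fderiv ℝ b x v :=
    (hb.continuous_fderiv one_ne_zero).clm_apply continuous_const
  have hparts := integral_mul_fderiv_eq_neg_fderiv_mul_of_integrable (μ := μ) (v := v)
    (by simpa only [hconj] using
      integrable_conj_mul hda hb.continuous (hac.fderiv_apply (𝕜 := ℝ) v))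
    (integrable_conj_mul ha.continuous hdb hac)
    (integrable_conj_mul ha.continuous hb.continuous hac)
    (fun x _ => ha'.differentiable one_ne_zero x) (fun x _ => hb.differentiable one_ne_zero x)
  simp only [hconj] at hparts
  rw [hparts, neg_neg]

end IntegrationByParts

section Dop

lemma continuous_pd (k : Fin n) {a : Rn n → ℂ} (ha : ContDiff ℝ 1 a) : Continuous (pd k a) :=
  (ha.continuous_fderiv one_ne_zero).clm_apply continuous_const

lemma hasCompactSupport_pd (k : Fin n) {a : Rn n → ℂ} (hac : HasCompactSupport a) :
    HasCompactSupport (pd k a) :=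
  hac.fderiv_apply (𝕜 := ℝ) _

lemma inner_fullSp (v w : FullSp m n) :
    inner ℂ v w = ∑ i, conj (v (Sum.inl i)) * w (Sum.inl i)
      + ∑ p, conj (v (Sum.inr p)) * w (Sum.inr p) := by
  simp [PiLp.inner_apply, Fintype.sum_sum_type, mul_comm]

lemma inner_Dop_left (f : Rn n → FullSp m n) (x : Rn n) (w : FullSp m n) :
    inner ℂ (Dop f x) w = ∑ p : Fin m × Fin n,
      (conj (pd p.2 (fun y => f y (Sum.inr p)) x) * w (Sum.inl p.1)
        - conj (pd p.2 (fun y => f y (Sum.inl p.1)) x) * w (Sum.inr p)) := by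
  simp only [inner_fullSp, Dop, Sum.elim_inl, Sum.elim_inr, map_sum, map_neg, neg_mul,
    Finset.sum_mul, Fintype.sum_prod_type, Finset.sum_add_distrib, sub_eq_add_neg,
    Finset.sum_neg_distrib]

lemma inner_Dop_right (f : FullSp m n) (h : Rn n → FullSp m n) (x : Rn n) :
    inner ℂ f (Dop h x) = ∑ p : Fin m × Fin n,
      (conj (f (Sum.inl p.1)) * pd p.2 (fun y => h y (Sum.inr p)) x
        - conj (f (Sum.inr p)) * pd p.2 (fun y => h y (Sum.inl p.1)) x) := by
  simp only [inner_fullSp, Dop, Sum.elim_inl, Sum.elim_inr, mul_neg, Finset.mul_sum,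
    Fintype.sum_prod_type, Finset.sum_add_distrib, sub_eq_add_neg, Finset.sum_neg_distrib]

lemma integral_inner_Dop_left_eq_right {f h : Rn n → FullSp m n} (hf : ContDiff ℝ 1 f)
    (hh : ContDiff ℝ 1 h) (hfc : HasCompactSupport f) :
    ∫ x, inner ℂ (Dop f x) (h x) = ∫ x, inner ℂ (f x) (Dop h x) := by
  have hfi : ∀ idx, ContDiff ℝ 1 fun y => f y idx := (contDiff_piLp 2).1 hf
  have hhi : ∀ idx, ContDiff ℝ 1 fun y => h y idx := (contDiff_piLp 2).1 hh
  have hfci : ∀ idx, HasCompactSupport fun y => f y idx := fun idx =>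
    hfc.comp_left (g := fun v : FullSp m n => v idx) rfl
  have hparts : ∀ (k : Fin n) (idx idx' : Fin m ⊕ Fin m × Fin n),
      ∫ x, conj (pd k (fun y => f y idx) x) * h x idx'
        = -∫ x, conj (f x idx) * pd k (fun y => h y idx') x := fun k idx idx' =>
    integral_conj_fderiv_mul (hfi idx) (hhi idx') (hfci idx) _
  have int_left : ∀ (k : Fin n) (idx idx' : Fin m ⊕ Fin m × Fin n),
      Integrable fun x => conj (pd k (fun y => f y idx) x) * h x idx' := fun k idx idx' =>
    integrable_conj_mul (continuous_pd k (hfi idx)) (hhi idx').continuous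
      (hasCompactSupport_pd k (hfci idx))
  have int_right : ∀ (k : Fin n) (idx idx' : Fin m ⊕ Fin m × Fin n),
      Integrable fun x => conj (f x idx) * pd k (fun y => h y idx') x := fun k idx idx' =>
    integrable_conj_mul (hfi idx).continuous (continuous_pd k (hhi idx')) (hfci idx)
  simp only [inner_Dop_left, inner_Dop_right]
  rw [integral_finsetSum, integral_finsetSum]
  · refine Finset.sum_congr rfl fun p _ => ?_
    rw [integral_sub (int_left _ _ _) (int_left _ _ _),
      integral_sub (int_right _ _ _) (int_right _ _ _), hparts, hparts]
    ring
  · exact fun p _ => (int_right _ _ _).sub (int_right _ _ _)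
  · exact fun p _ => (int_left _ _ _).sub (int_left _ _ _)

lemma Dop_reflN (h : Rn n → FullSp m n) (x : Rn n) :
    Dop (fun y => reflN m n (h y)) x = -reflN m n (Dop h x) := by
  ext idx
  rcases idx with i | p <;> simp [Dop, pd]

end Dop

theorem statement12_general (m n : ℕ)
    (A : Rn n → FullSp m n →L[ℂ] FullSp m n) (hA : ContDiff ℝ 1 A)
    (hAinv : ∀ x, IsUnit (blockNN (A x)))
    (f g : Rn n → FullSp m n) (hf : ContDiff ℝ 1 f) (hg : ContDiff ℝ 1 g)
    (hfc : HasCompactSupport f) :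
    ∫ x, (inner ℂ (reflN m n (hatT (A x) (Dop f x))) (g x) : ℂ)
      = - ∫ x, (inner ℂ (reflN m n (f x))
          (Dop (fun y => hatT (ContinuousLinearMap.adjoint (A y)) (g y)) x) : ℂ) := by
  set h := fun y => hatT (adjoint (A y)) (g y)
  have hh : ContDiff ℝ 1 h :=
    (contDiff_hatT (contDiff_adjoint hA) fun x => isUnit_blockNN_adjoint _ (hAinv x)
      ).clm_apply_complex hg
  calc ∫ x, inner ℂ (reflN m n (hatT (A x) (Dop f x))) (g x)
      = ∫ x, inner ℂ (Dop f x) (reflN m n (h x)) := by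
        simp only [inner_reflN_hatT_apply, h]
    _ = ∫ x, inner ℂ (f x) (Dop (fun y => reflN m n (h y)) x) :=
        integral_inner_Dop_left_eq_right hf (contDiff_const.clm_apply_complex hh) hfc
    _ = -∫ x, inner ℂ (reflN m n (f x)) (Dop h x) := by
        simp only [Dop_reflN, inner_neg_right, integral_neg, ← adjoint_inner_left, adjoint_reflN]

/-- the duality identity `(g, N(BD)f) = ((−D(A*)^)g, Nf)` for test
functions, where `B = Â` and `Ã = (A*)^`. -/
theorem statement12 (m n : ℕ) (hm : 1 ≤ m) (hn : 1 ≤ n)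
    (A : Rn n → FullSp m n →L[ℂ] FullSp m n) (hA : ContDiff ℝ 1 A)
    (hAinv : ∀ x, IsUnit (blockNN (A x)))
    (f g : Rn n → FullSp m n) (hf : ContDiff ℝ 1 f) (hg : ContDiff ℝ 1 g)
    (hfc : HasCompactSupport f) (hgc : HasCompactSupport g) :
    ∫ x, (inner ℂ (reflN m n (hatT (A x) (Dop f x))) (g x) : ℂ)
      = - ∫ x, (inner ℂ (reflN m n (f x))
          (Dop (fun y => hatT (ContinuousLinearMap.adjoint (A y)) (g y)) x) : ℂ) :=
  statement12_general m n A hA hAinv f g hf hg hfc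

end LayerPotential
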